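/- Let γ > 1, let A, B: ℝ → (0,∞) be C¹ functions, let Ω ⊆ ℝ² be open, and let ψ ∈ C²(Ω) be such that at every point the Bernoulli relation ½|∇ψ|² = B(ψ)ρ² − A(ψ)ρ^{γ+1} has a solution ρ > 0 on the subsonic branch ρ^{γ−1} > 2B(ψ)/((γ+1)A(ψ)) (so ρ is a C¹ function on Ω). Then at every point of Ω, the nondivergence-form equation Σ_{i,j} a_{ij}(ψ,∇ψ) ψ_{x_i x_j} = F(ψ,∇ψ) holds if and only if the divergence-form equation ∇·(∇ψ/ρ) = B′(ψ) ρ − (1/γ) A′(ψ) ρ^γ holds. -/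

import Mathlib

open Set
open scoped ENNReal NNReal

noncomputable section

abbrev E2 : Type := EuclideanSpace ℝ (Fin 2)

/-- The point `(a, b)` of the Euclidean plane. -/
def pt (a b : ℝ) : E2 := (WithLp.equiv 2 (Fin 2 → ℝ)).symm ![a, b]

/-- Partial derivative in the `i`-th coordinate direction. -/
def pd (i : Fin 2) (f : E2 → ℝ) : E2 → ℝ :=
  fun x => fderiv ℝ f x (EuclideanSpace.single i 1)

/-- Iterated mixed partial derivative `∂₁^{k₁} ∂₂^{k₂} f`. -/
def Dmix (k₁ k₂ : ℕ) (f : E2 → ℝ) : E2 → ℝ := (pd 0)^[k₁] ((pd 1)^[k₂] f)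

/-- `ρ` is the subsonic-branch solution of the Bernoulli relation
`½|∇ψ|² = B(ψ)ρ² - A(ψ)ρ^{γ+1}` at the point `x`. -/
def BernoulliBranch (γ : ℝ) (A B : ℝ → ℝ) (ψ : E2 → ℝ) (ρ : ℝ) (x : E2) : Prop :=
  0 < ρ ∧ 2 * B (ψ x) / ((γ + 1) * A (ψ x)) < ρ ^ (γ - 1) ∧
    (pd 0 ψ x ^ 2 + pd 1 ψ x ^ 2) / 2 = B (ψ x) * ρ ^ 2 - A (ψ x) * ρ ^ (γ + 1)

/-- The nondivergence-form reduced equation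
`Σ_{i,j} a_{ij}(ψ,∇ψ) ψ_{x_i x_j} = F(ψ,∇ψ)` at the point `x`, with density value `ρ`. -/
def NonDivEq (γ : ℝ) (A B : ℝ → ℝ) (ψ : E2 → ℝ) (ρ : ℝ) (x : E2) : Prop :=
  ((γ - 1) * A (ψ x) * ρ ^ (γ + 1) - pd 1 ψ x ^ 2) * pd 0 (pd 0 ψ) x +
      pd 0 ψ x * pd 1 ψ x * (pd 0 (pd 1 ψ) x + pd 1 (pd 0 ψ) x) +
      ((γ - 1) * A (ψ x) * ρ ^ (γ + 1) - pd 0 ψ x ^ 2) * pd 1 (pd 1 ψ) x =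
    ((γ - 1) / γ) * ρ ^ (γ + 3) *
      (γ * A (ψ x) * deriv B (ψ x) - 2 * deriv A (ψ x) * B (ψ x) +
        A (ψ x) * deriv A (ψ x) * ρ ^ (γ - 1))

/-- The reduced elliptic equation for the stream function on `Ω`: at every point the
Bernoulli relation is solvable on the subsonic branch and, with that density,
the equation `a_{ij}(ψ,∇ψ) ψ_{x_i x_j} = F(ψ,∇ψ)` holds. -/
def ReducedEq (γ : ℝ) (A B : ℝ → ℝ) (Ω : Set E2) (ψ : E2 → ℝ) : Prop :=
  ∀ x ∈ Ω, ∃ ρ : ℝ, BernoulliBranch γ A B ψ ρ x ∧ NonDivEq γ A B ψ ρ x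

open Filter Topology

/-!
Differentiating the Bernoulli relation `½|∇ψ|² = B(ψ)ρ² - A(ψ)ρ^{γ+1}` in `xᵢ` expresses `∂ᵢρ`
through the second derivatives of `ψ`, with coefficient `2B(ψ)ρ - (γ+1)A(ψ)ρ^γ`, which is negative
exactly on the subsonic branch. Substituting this into the expansion of `∇·(∇ψ/ρ)` shows that the
residual of the nondivergence form equation is `-(2B(ψ)ρ - (γ+1)A(ψ)ρ^γ) ρ²` times the residual of
the divergence form equation, so the two vanish together. The same sign condition makes the
right-hand side of the Bernoulli relation strictly decreasing on the branch, so the subsonic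
density is unique, and by the implicit function theorem it is `C¹`.
-/

theorem ContinuousLinearMap.IsInvertible.of_apply_one_ne_zero {L : ℝ →L[ℝ] ℝ} (hL : L 1 ≠ 0) :
    L.IsInvertible :=
  ⟨ContinuousLinearEquiv.unitsEquivAut ℝ (Units.mk0 (L 1) hL),
    ContinuousLinearMap.ext_ring (by simp)⟩

theorem contDiffAt_of_eventually_unique_zero {E : Type*} [NormedAddCommGroup E]
    [NormedSpace ℝ E] [CompleteSpace E] {n : WithTop ℕ∞} {G : E × ℝ → ℝ} {r : E → ℝ} {x₀ : E}
    {d : ℝ} {U : Set (E × ℝ)} (hG : ContDiffAt ℝ n G (x₀, r x₀)) (hn : n ≠ 0)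
    (hd : HasDerivAt (fun t => G (x₀, t)) d (r x₀)) (hd0 : d ≠ 0) (hU : U ∈ 𝓝 (x₀, r x₀))
    (huniq : ∀ᶠ x in 𝓝 x₀, ∀ t, (x, t) ∈ U → G (x, t) = G (x₀, r x₀) → t = r x) :
    ContDiffAt ℝ n r x₀ := by
  have hpartial : HasDerivAt (fun t => G (x₀, t))
      ((fderiv ℝ G (x₀, r x₀) ∘L .inr ℝ E ℝ) 1) (r x₀) :=
    ((hG.differentiableAt hn).hasFDerivAt.comp (r x₀)
      (hasFDerivAt_prodMk_right x₀ (r x₀))).hasDerivAt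
  have hinv : (fderiv ℝ G (x₀, r x₀) ∘L .inr ℝ E ℝ).IsInvertible :=
    .of_apply_one_ne_zero (hpartial.unique hd ▸ hd0)
  set φ := hG.implicitFunction hn hinv
  have hφ : ContDiffAt ℝ n φ x₀ := hG.contDiffAt_implicitFunction hn hinv
  have hgraph : Tendsto (fun x => (x, φ x)) (𝓝 x₀) (𝓝 (x₀, r x₀)) := by
    simpa [φ, hG.implicitFunction_apply_self hn hinv] using
      (continuousAt_id.prodMk hφ.continuousAt).tendsto
  have hφr : φ =ᶠ[𝓝 x₀] r := by
    filter_upwards [huniq, hG.eventually_apply_implicitFunction hn hinv, hgraph hU]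
      with x hx hzero hmem
    exact hx _ hmem hzero
  exact hφ.congr_of_eventuallyEq hφr.symm

section PartialDerivatives

variable {f g : E2 → ℝ} {x : E2}

theorem ContDiffOn.pd {n : WithTop ℕ∞} {Ω : Set E2} (hf : ContDiffOn ℝ (n + 1) f Ω)
    (hΩ : IsOpen Ω) (i : Fin 2) : ContDiffOn ℝ n (pd i f) Ω :=
  (hf.fderiv_of_isOpen hΩ le_rfl).clm_apply contDiffOn_const

theorem fderiv_apply_single (i : Fin 2) : fderiv ℝ f x (EuclideanSpace.single i 1) = pd i f x :=
  rfl

theorem HasFDerivAt.pd_eq {f' : E2 →L[ℝ] ℝ} (h : HasFDerivAt f f' x) (i : Fin 2) :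
    pd i f x = f' (EuclideanSpace.single i 1) := by
  rw [← fderiv_apply_single, h.fderiv]

theorem Filter.EventuallyEq.pd_eq (h : f =ᶠ[𝓝 x] g) (i : Fin 2) : pd i f x = pd i g x := by
  rw [← fderiv_apply_single, h.fderiv_eq, fderiv_apply_single]

theorem pd_div (hf : DifferentiableAt ℝ f x) (hg : DifferentiableAt ℝ g x) (hgx : g x ≠ 0)
    (i : Fin 2) :
    pd i (fun y => f y / g y) x = (pd i f x * g x - f x * pd i g x) / g x ^ 2 := by
  have h := hf.hasFDerivAt.mul ((hasDerivAt_inv hgx).comp_hasFDerivAt x hg.hasFDerivAt)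
  rw [show (fun y => f y / g y) = f * (fun y => y⁻¹) ∘ g from funext fun y => div_eq_mul_inv _ _,
    h.pd_eq]
  simp only [add_apply, smul_apply, smul_eq_mul, Function.comp_apply, fderiv_apply_single]
  field_simp
  ring

theorem pd_half_sq_add_sq (hf : DifferentiableAt ℝ f x) (hg : DifferentiableAt ℝ g x)
    (i : Fin 2) :
    pd i (fun y => (f y ^ 2 + g y ^ 2) / 2) x = f x * pd i f x + g x * pd i g x := by
  have h : HasFDerivAt (fun y => (f y ^ 2 + g y ^ 2) * 2⁻¹) _ x :=
    ((hf.hasFDerivAt.pow 2).add (hg.hasFDerivAt.pow 2)).mul_const (2⁻¹ : ℝ)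
  simp_rw [div_eq_mul_inv]
  rw [h.pd_eq]
  simp only [add_apply, smul_apply, smul_eq_mul, fderiv_apply_single]
  ring

end PartialDerivatives

def halfMassFluxSq (γ a b t : ℝ) : ℝ := b * t ^ 2 - a * t ^ (γ + 1)

def subsonicBranch (γ a b : ℝ) : Set ℝ := {t | 0 < t ∧ 2 * b / ((γ + 1) * a) < t ^ (γ - 1)}

section Bernoulli

variable {γ a b t : ℝ}

theorem bernoulliBranch_iff {A B : ℝ → ℝ} {ψ : E2 → ℝ} {ρ : ℝ} {x : E2} :
    BernoulliBranch γ A B ψ ρ x ↔ ρ ∈ subsonicBranch γ (A (ψ x)) (B (ψ x)) ∧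
      (pd 0 ψ x ^ 2 + pd 1 ψ x ^ 2) / 2 = halfMassFluxSq γ (A (ψ x)) (B (ψ x)) ρ :=
  and_assoc.symm

theorem hasDerivAt_halfMassFluxSq (ht : t ≠ 0) :
    HasDerivAt (halfMassFluxSq γ a b) (2 * b * t - (γ + 1) * a * t ^ γ) t := by
  have hsq : HasDerivAt (fun s : ℝ => s ^ 2) (2 * t) t := by simpa using hasDerivAt_pow 2 t
  have hpow := Real.hasDerivAt_rpow_const (p := γ + 1) (Or.inl ht)
  rw [add_sub_cancel_right] at hpow
  exact ((hsq.const_mul b).sub (hpow.const_mul a)).congr_deriv (by ring)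

theorem deriv_halfMassFluxSq_neg (hγ : -1 < γ) (ha : 0 < a) (ht : t ∈ subsonicBranch γ a b) :
    2 * b * t - (γ + 1) * a * t ^ γ < 0 := by
  obtain ⟨htpos, hbranch⟩ := ht
  have hga : 0 < (γ + 1) * a := mul_pos (by linarith) ha
  have h2b : 2 * b < (γ + 1) * a * t ^ (γ - 1) := by rwa [div_lt_iff₀' hga] at hbranch
  have hγt : t ^ γ = t ^ (γ - 1) * t := by rw [← Real.rpow_add_one htpos.ne', sub_add_cancel]
  rw [hγt]
  nlinarith [mul_lt_mul_of_pos_right h2b htpos]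

theorem subsonicBranch_ordConnected (hγ : 1 ≤ γ) : (subsonicBranch γ a b).OrdConnected := by
  refine ⟨fun s hs u _ t ht => ⟨hs.1.trans_le ht.1, hs.2.trans_le ?_⟩⟩
  exact Real.rpow_le_rpow hs.1.le ht.1 (by linarith)

theorem strictAntiOn_halfMassFluxSq (hγ : 1 < γ) (ha : 0 < a) :
    StrictAntiOn (halfMassFluxSq γ a b) (subsonicBranch γ a b) := by
  have hderiv : ∀ t ∈ subsonicBranch γ a b,
      HasDerivAt (halfMassFluxSq γ a b) (2 * b * t - (γ + 1) * a * t ^ γ) t :=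
    fun t ht => hasDerivAt_halfMassFluxSq ht.1.ne'
  refine strictAntiOn_of_deriv_neg (subsonicBranch_ordConnected hγ.le).convex
    (fun t ht => (hderiv t ht).continuousAt.continuousWithinAt) fun t ht => ?_
  rw [(hderiv t (interior_subset ht)).deriv]
  exact deriv_halfMassFluxSq_neg (by linarith) ha (interior_subset ht)

theorem pd_halfMassFluxSq_comp {A B : ℝ → ℝ} {ψ ρ : E2 → ℝ} {x : E2}
    (hA : DifferentiableAt ℝ A (ψ x)) (hB : DifferentiableAt ℝ B (ψ x))
    (hψ : DifferentiableAt ℝ ψ x) (hρ : DifferentiableAt ℝ ρ x) (hρx : ρ x ≠ 0) (i : Fin 2) :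
    pd i (fun y => halfMassFluxSq γ (A (ψ y)) (B (ψ y)) (ρ y)) x =
      (deriv B (ψ x) * ρ x ^ 2 - deriv A (ψ x) * ρ x ^ (γ + 1)) * pd i ψ x +
        (2 * B (ψ x) * ρ x - (γ + 1) * A (ψ x) * ρ x ^ γ) * pd i ρ x := by
  have hAψ := hA.hasDerivAt.comp_hasFDerivAt x hψ.hasFDerivAt
  have hBψ := hB.hasDerivAt.comp_hasFDerivAt x hψ.hasFDerivAt
  have h : HasFDerivAt (fun y => halfMassFluxSq γ (A (ψ y)) (B (ψ y)) (ρ y)) _ x :=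
    (hBψ.mul (hρ.hasFDerivAt.pow 2)).sub (hAψ.mul (hρ.hasFDerivAt.rpow_const (Or.inl hρx)))
  rw [h.pd_eq]
  simp only [add_apply, sub_apply, smul_apply, smul_eq_mul, fderiv_apply_single,
    add_sub_cancel_right, Function.comp_apply]
  ring

end Bernoulli

section Algebra

variable {γ a b a' b' r p₁ p₂ p₁₁ p₁₂ p₂₁ p₂₂ r₁ r₂ : ℝ}

/-- Read `pᵢ = ∂ᵢψ`, `pᵢⱼ = ∂ⱼ∂ᵢψ`, `r = ρ`, `rᵢ = ∂ᵢρ`, `a = A(ψ)`, `a' = A'(ψ)` (likewise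
`b`, `b'`), and `h₁`, `h₂` as the derivatives of the Bernoulli relation `hrel`. -/
theorem nonDiv_residual_eq (hγ : γ ≠ 0) (hr : 0 < r)
    (hrel : (p₁ ^ 2 + p₂ ^ 2) / 2 = b * r ^ 2 - a * r ^ (γ + 1))
    (h₁ : p₁ * p₁₁ + p₂ * p₂₁ =
      (b' * r ^ 2 - a' * r ^ (γ + 1)) * p₁ + (2 * b * r - (γ + 1) * a * r ^ γ) * r₁)
    (h₂ : p₁ * p₁₂ + p₂ * p₂₂ =
      (b' * r ^ 2 - a' * r ^ (γ + 1)) * p₂ + (2 * b * r - (γ + 1) * a * r ^ γ) * r₂) :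
    (((γ - 1) * a * r ^ (γ + 1) - p₂ ^ 2) * p₁₁ + p₁ * p₂ * (p₂₁ + p₁₂) +
        ((γ - 1) * a * r ^ (γ + 1) - p₁ ^ 2) * p₂₂) -
      (γ - 1) / γ * r ^ (γ + 3) * (γ * a * b' - 2 * a' * b + a * a' * r ^ (γ - 1)) =
    -(2 * b * r - (γ + 1) * a * r ^ γ) *
      (p₁₁ * r - p₁ * r₁ + (p₂₂ * r - p₂ * r₂) - (b' * r - 1 / γ * a' * r ^ γ) * r ^ 2) := by
  have hpow : ∀ n : ℕ, r ^ (γ - 1 + n) = r ^ (γ - 1) * r ^ n :=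
    Real.rpow_add_natCast hr.ne' _
  have hpow₀ : r ^ γ = r ^ (γ - 1) * r := by simpa using hpow 1
  have hpow₁ : r ^ (γ + 1) = r ^ (γ - 1) * r ^ 2 := by convert hpow 2 using 2; push_cast; ring
  have hpow₃ : r ^ (γ + 3) = r ^ (γ - 1) * r ^ 4 := by convert hpow 4 using 2; push_cast; ring
  simp only [hpow₀, hpow₁, hpow₃] at hrel h₁ h₂ ⊢
  have hinv : 1 / γ * γ = 1 := by field_simp
  linear_combination p₁ * h₁ + p₂ * h₂ +
    (2 * (b' - a' * r ^ (γ - 1)) * r ^ 2 - 2 * (p₁₁ + p₂₂)) * hrel +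
    r ^ (γ - 1) * r ^ 4 * (2 * b * a' + a * b' - 2 * a * a' * r ^ (γ - 1) - γ * a * b') * hinv

theorem nonDiv_iff_div_of_bernoulli (hγ : γ ≠ 0) (hr : 0 < r)
    (hD : 2 * b * r - (γ + 1) * a * r ^ γ ≠ 0)
    (hrel : (p₁ ^ 2 + p₂ ^ 2) / 2 = b * r ^ 2 - a * r ^ (γ + 1))
    (h₁ : p₁ * p₁₁ + p₂ * p₂₁ =
      (b' * r ^ 2 - a' * r ^ (γ + 1)) * p₁ + (2 * b * r - (γ + 1) * a * r ^ γ) * r₁)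
    (h₂ : p₁ * p₁₂ + p₂ * p₂₂ =
      (b' * r ^ 2 - a' * r ^ (γ + 1)) * p₂ + (2 * b * r - (γ + 1) * a * r ^ γ) * r₂) :
    ((γ - 1) * a * r ^ (γ + 1) - p₂ ^ 2) * p₁₁ + p₁ * p₂ * (p₂₁ + p₁₂) +
        ((γ - 1) * a * r ^ (γ + 1) - p₁ ^ 2) * p₂₂ =
      (γ - 1) / γ * r ^ (γ + 3) * (γ * a * b' - 2 * a' * b + a * a' * r ^ (γ - 1)) ↔
    (p₁₁ * r - p₁ * r₁) / r ^ 2 + (p₂₂ * r - p₂ * r₂) / r ^ 2 = b' * r - 1 / γ * a' * r ^ γ := by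
  rw [← sub_eq_zero, nonDiv_residual_eq hγ hr hrel h₁ h₂, neg_mul, neg_eq_zero, mul_eq_zero,
    or_iff_right hD, ← add_div, div_eq_iff (by positivity)]
  exact sub_eq_zero

end Algebra

theorem contDiffOn_of_bernoulliBranch {γ : ℝ} (hγ : 1 < γ) {A B : ℝ → ℝ}
    (hA : ContDiff ℝ 1 A) (hB : ContDiff ℝ 1 B) (hApos : ∀ s, 0 < A s) {Ω : Set E2}
    (hΩ : IsOpen Ω) {ψ ρ : E2 → ℝ} (hψ : ContDiffOn ℝ 2 ψ Ω)
    (hρ : ∀ x ∈ Ω, BernoulliBranch γ A B ψ (ρ x) x) : ContDiffOn ℝ 1 ρ Ω := by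
  intro x hx
  have hΩx : Ω ∈ 𝓝 x := hΩ.mem_nhds hx
  obtain ⟨hbranch, hrel⟩ := bernoulliBranch_iff.1 (hρ x hx)
  have hψx : ContDiffAt ℝ 1 ψ x := (hψ.contDiffAt hΩx).of_le one_le_two
  have hpd : ∀ i, ContDiffAt ℝ 1 (pd i ψ) x := fun i => ((hψ.pd hΩ i).contDiffAt hΩx)
  set G : E2 × ℝ → ℝ := fun p =>
    halfMassFluxSq γ (A (ψ p.1)) (B (ψ p.1)) p.2 - (pd 0 ψ p.1 ^ 2 + pd 1 ψ p.1 ^ 2) / 2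
  have hG : ContDiffAt ℝ 1 G (x, ρ x) := by
    simp only [G, halfMassFluxSq]
    fun_prop (disch := exact hbranch.1.ne')
  have hd : HasDerivAt (fun t => G (x, t))
      (2 * B (ψ x) * ρ x - (γ + 1) * A (ψ x) * ρ x ^ γ) (ρ x) :=
    (hasDerivAt_halfMassFluxSq (γ := γ) (a := A (ψ x)) (b := B (ψ x)) hbranch.1.ne').sub_const
      ((pd 0 ψ x ^ 2 + pd 1 ψ x ^ 2) / 2)
  have hU : {p : E2 × ℝ | p.2 ∈ subsonicBranch γ (A (ψ p.1)) (B (ψ p.1))} ∈ 𝓝 (x, ρ x) := by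
    have hψc : ContinuousAt ψ x := hψx.continuousAt
    have hAc : Continuous A := hA.continuous
    have hBc : Continuous B := hB.continuous
    have hc : ContinuousAt (fun p : E2 × ℝ => 2 * B (ψ p.1) / ((γ + 1) * A (ψ p.1))) (x, ρ x) :=
      by fun_prop (disch := exact (mul_pos (by linarith) (hApos _)).ne')
    have hpow : ContinuousAt (fun p : E2 × ℝ => p.2 ^ (γ - 1)) (x, ρ x) := by
      fun_prop (disch := exact Or.inl hbranch.1.ne')
    exact (continuousAt_const.eventually_lt continuousAt_snd hbranch.1).and
      (hc.eventually_lt hpow hbranch.2)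
  refine (contDiffAt_of_eventually_unique_zero hG one_ne_zero hd
    (deriv_halfMassFluxSq_neg (by linarith) (hApos _) hbranch).ne hU ?_).contDiffWithinAt
  filter_upwards [hΩx] with y hy t ht hGt
  obtain ⟨hbranch_y, hrel_y⟩ := bernoulliBranch_iff.1 (hρ y hy)
  refine (strictAntiOn_halfMassFluxSq hγ (hApos _)).injOn ht hbranch_y ?_
  simp only [G, hrel, sub_self] at hGt
  linarith

theorem nonDivEq_iff_div_of_eventually_bernoulliBranch {γ : ℝ} (hγ : 0 < γ) {A B : ℝ → ℝ}
    {ψ ρ : E2 → ℝ} {x : E2} (hA : DifferentiableAt ℝ A (ψ x)) (hB : DifferentiableAt ℝ B (ψ x))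
    (hApos : 0 < A (ψ x)) (hψ : DifferentiableAt ℝ ψ x)
    (hψ' : ∀ i, DifferentiableAt ℝ (pd i ψ) x) (hρ : DifferentiableAt ℝ ρ x)
    (hbr : ∀ᶠ y in 𝓝 x, BernoulliBranch γ A B ψ (ρ y) y) :
    NonDivEq γ A B ψ (ρ x) x ↔
      pd 0 (fun y => pd 0 ψ y / ρ y) x + pd 1 (fun y => pd 1 ψ y / ρ y) x =
        deriv B (ψ x) * ρ x - (1 / γ) * deriv A (ψ x) * ρ x ^ γ := by
  obtain ⟨hbranch, hrel⟩ := bernoulliBranch_iff.1 hbr.self_of_nhds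
  have hρx : ρ x ≠ 0 := hbranch.1.ne'
  have hrel' : (fun y => (pd 0 ψ y ^ 2 + pd 1 ψ y ^ 2) / 2) =ᶠ[𝓝 x]
      fun y => halfMassFluxSq γ (A (ψ y)) (B (ψ y)) (ρ y) :=
    hbr.mono fun y hy => (bernoulliBranch_iff.1 hy).2
  have hdiff : ∀ i, pd 0 ψ x * pd i (pd 0 ψ) x + pd 1 ψ x * pd i (pd 1 ψ) x =
      (deriv B (ψ x) * ρ x ^ 2 - deriv A (ψ x) * ρ x ^ (γ + 1)) * pd i ψ x +
        (2 * B (ψ x) * ρ x - (γ + 1) * A (ψ x) * ρ x ^ γ) * pd i ρ x := fun i => by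
    rw [← pd_half_sq_add_sq (hψ' 0) (hψ' 1), hrel'.pd_eq, pd_halfMassFluxSq_comp hA hB hψ hρ hρx]
  rw [pd_div (hψ' 0) hρ hρx, pd_div (hψ' 1) hρ hρx]
  exact nonDiv_iff_div_of_bernoulli (by positivity) hbranch.1
    (deriv_halfMassFluxSq_neg (by linarith) hApos hbranch).ne hrel (hdiff 0) (hdiff 1)

theorem divergence_form_equivalence_general
    (γ : ℝ) (hγ : 1 < γ) (A B : ℝ → ℝ)
    (hA : ContDiff ℝ 1 A) (hB : ContDiff ℝ 1 B)
    (hApos : ∀ s, 0 < A s)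
    (Ω : Set E2) (hΩ : IsOpen Ω) (ψ : E2 → ℝ) (hψ : ContDiffOn ℝ 2 ψ Ω)
    (hex : ∀ x ∈ Ω, ∃ ρ : ℝ, BernoulliBranch γ A B ψ ρ x) :
    ∃ ρf : E2 → ℝ,
      (∀ x ∈ Ω, BernoulliBranch γ A B ψ (ρf x) x) ∧
      ContDiffOn ℝ 1 ρf Ω ∧
      ∀ x ∈ Ω,
        (NonDivEq γ A B ψ (ρf x) x ↔
          pd 0 (fun y => pd 0 ψ y / ρf y) x + pd 1 (fun y => pd 1 ψ y / ρf y) x =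
            deriv B (ψ x) * ρf x - (1 / γ) * deriv A (ψ x) * ρf x ^ γ) := by
  choose! ρ hρ using hex
  have hρC : ContDiffOn ℝ 1 ρ Ω := contDiffOn_of_bernoulliBranch hγ hA hB hApos hΩ hψ hρ
  refine ⟨ρ, hρ, hρC, fun x hx => ?_⟩
  have hΩx : Ω ∈ 𝓝 x := hΩ.mem_nhds hx
  exact nonDivEq_iff_div_of_eventually_bernoulliBranch (by linarith)
    (hA.differentiable one_ne_zero _) (hB.differentiable one_ne_zero _) (hApos _)
    ((hψ.contDiffAt hΩx).differentiableAt two_ne_zero)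
    (fun i => ((hψ.pd hΩ i).contDiffAt hΩx).differentiableAt one_ne_zero)
    ((hρC.contDiffAt hΩx).differentiableAt one_ne_zero) (eventually_of_mem hΩx hρ)

/-- equivalence of (3.14) and (3.15) in the paper. For `ψ ∈ C²(Ω)`
whose Bernoulli relation is solvable on the subsonic branch at every point (with
density `ρ`, which is then `C¹`), the nondivergence form equation
`a_{ij}(ψ,∇ψ)ψ_{x_ix_j} = F(ψ,∇ψ)` holds at a point iff the divergence form
equation `∇·(∇ψ/ρ) = B'(ψ)ρ - (1/γ)A'(ψ)ρ^γ` holds there. -/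
theorem divergence_form_equivalence
    (γ : ℝ) (hγ : 1 < γ) (A B : ℝ → ℝ)
    (hA : ContDiff ℝ 1 A) (hB : ContDiff ℝ 1 B)
    (hApos : ∀ s, 0 < A s) (hBpos : ∀ s, 0 < B s)
    (Ω : Set E2) (hΩ : IsOpen Ω) (ψ : E2 → ℝ) (hψ : ContDiffOn ℝ 2 ψ Ω)
    (hex : ∀ x ∈ Ω, ∃ ρ : ℝ, BernoulliBranch γ A B ψ ρ x) :
    ∃ ρf : E2 → ℝ,
      (∀ x ∈ Ω, BernoulliBranch γ A B ψ (ρf x) x) ∧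
      ContDiffOn ℝ 1 ρf Ω ∧
      ∀ x ∈ Ω,
        (NonDivEq γ A B ψ (ρf x) x ↔
          pd 0 (fun y => pd 0 ψ y / ρf y) x + pd 1 (fun y => pd 1 ψ y / ρf y) x =
            deriv B (ψ x) * ρf x - (1 / γ) * deriv A (ψ x) * ρf x ^ γ) :=
  divergence_form_equivalence_general γ hγ A B hA hB hApos Ω hΩ ψ hψ hex
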